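/- The solution graph of a Horn formula without positive unit clauses is disconnected if and only if the formula has a non-empty maximal self-implicating set of variables containing no restraint set. -/

import Mathlib

def SatClause {n : ℕ} (a : Fin n → Bool) (c : List (Fin n × Bool)) : Prop :=
  ∃ l ∈ c, (if l.2 then a l.1 else !(a l.1)) = true

def IsHornClause {n : ℕ} (c : List (Fin n × Bool)) : Prop :=
  (c.filter (fun l => l.2)).length ≤ 1

def Reach {ι : Type*} [Fintype ι] (S : Set (ι → Bool)) : (ι → Bool) → (ι → Bool) → Prop :=
  Relation.ReflTransGen (fun u v => u ∈ S ∧ v ∈ S ∧ hammingDist u v = 1)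

def Connected {ι : Type*} [Fintype ι] (S : Set (ι → Bool)) : Prop :=
  ∀ a ∈ S, ∀ b ∈ S, Reach S a b

def Implied {n : ℕ} (S : Set (Fin n → Bool)) (U : Finset (Fin n)) (x : Fin n) : Prop :=
  ∀ a ∈ S, (∀ u ∈ U, a u = true) → a x = true

def MaxSelfImplicating {n : ℕ} (S : Set (Fin n → Bool)) (U : Finset (Fin n)) : Prop :=
  (∀ x ∈ U, Implied S (U.erase x) x) ∧ (∀ x, Implied S U x → x ∈ U)

def NoRestraintSet {n : ℕ} (φ : List (List (Fin n × Bool))) (U : Finset (Fin n)) : Prop :=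
  ∀ c ∈ φ, (∀ l ∈ c, l.2 = false) → ¬ (∀ l ∈ c, l.1 ∈ U)

/-!
Models of a Horn formula are closed under pointwise conjunction. Along an edge of the solution
graph only one variable changes, so from a model that is true on a self-implicating set `U` one
only reaches models that are true on `U`. If `U` is moreover maximal and contains no restraint
set, its indicator is a model; so is the all-false assignment when there are no positive unit
clauses, and the two lie in different components.

Conversely, if the true variables of a model `a` are not self-implicating, the conjunction of `a`
with a model witnessing this switches off a single variable of `a`. So if no model has a
non-empty self-implicating set of true variables, induction on the number of true variables
connects every model to the all-false assignment. The true variables of a model contain every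
variable they imply, and no restraint set.
-/

theorem List.eq_of_mem_of_length_le_one {α : Type*} {l : List α} (h : l.length ≤ 1) {x y : α}
    (hx : x ∈ l) (hy : y ∈ l) : x = y := by
  obtain _ | ⟨z, _ | ⟨w, t⟩⟩ := l <;> simp_all

section Clauses

variable {n : ℕ} {c : List (Fin n × Bool)}

theorem IsHornClause.eq_of_mem (h : IsHornClause c) {l l' : Fin n × Bool} (hl : l ∈ c)
    (hl' : l' ∈ c) (hpos : l.2 = true) (hpos' : l'.2 = true) : l = l' :=
  List.eq_of_mem_of_length_le_one h (List.mem_filter.2 ⟨hl, hpos⟩) (List.mem_filter.2 ⟨hl', hpos'⟩)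

theorem IsHornClause.satClause_and (h : IsHornClause c) {a b : Fin n → Bool}
    (ha : SatClause a c) (hb : SatClause b c) : SatClause (fun i => a i && b i) c := by
  obtain ⟨⟨i, s⟩, hi, ha⟩ := ha
  obtain ⟨⟨j, t⟩, hj, hb⟩ := hb
  cases s
  · exact ⟨_, hi, by simp_all⟩
  cases t
  · exact ⟨_, hj, by simp_all⟩
  cases h.eq_of_mem hi hj rfl rfl
  exact ⟨_, hi, by simp_all⟩

theorem IsHornClause.satClause_false (h : IsHornClause c) (hNoPosUnit : ∀ i, c ≠ [(i, true)])
    (hne : c ≠ []) : SatClause (fun _ => false) c := by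
  by_contra hsat
  have hpos : ∀ l ∈ c, l.2 = true := fun l hl => by
    by_contra hl2
    exact hsat ⟨l, hl, by simp_all⟩
  obtain _ | ⟨⟨i, s⟩, _ | ⟨l', t⟩⟩ := c
  · exact hne rfl
  · simp only [List.mem_singleton, forall_eq] at hpos
    exact hNoPosUnit i (by rw [hpos])
  · simp [IsHornClause, List.filter_eq_self.2 hpos] at h

end Clauses

section Hamming

variable {ι : Type*} [Fintype ι] {β : ι → Type*} [∀ i, DecidableEq (β i)]

theorem hammingDist_update_self [DecidableEq ι] (a : ∀ i, β i) {x : ι} {v : β x} (h : a x ≠ v) :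
    hammingDist a (Function.update a x v) = 1 := by
  rw [hammingDist, Finset.card_eq_one]
  refine ⟨x, Finset.ext fun i => ?_⟩
  by_cases hi : i = x
  · subst hi; simpa using h
  · simp [hi]

theorem eq_of_hammingDist_eq_one {a b : ∀ i, β i} (h : hammingDist a b = 1) {i j : ι}
    (hj : a j ≠ b j) (hi : i ≠ j) : a i = b i := by
  by_contra hne
  exact hi (Finset.card_le_one.1 h.le i (by simpa using hne) j (by simpa using hj))

end Hamming

section Reach

variable {ι : Type*} [Fintype ι] {S : Set (ι → Bool)}

theorem Reach.symm {a b : ι → Bool} (h : Reach S a b) : Reach S b a :=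
  haveI : Std.Symm fun u v : ι → Bool => u ∈ S ∧ v ∈ S ∧ hammingDist u v = 1 :=
    ⟨fun _ _ ⟨hu, hv, hd⟩ => ⟨hv, hu, by rwa [hammingDist_comm]⟩⟩
  Std.Symm.symm (r := Relation.ReflTransGen _) _ _ h

theorem connected_of_reach {z : ι → Bool} (h : ∀ a ∈ S, Reach S z a) : Connected S :=
  fun a ha b hb => Relation.ReflTransGen.trans (h a ha).symm (h b hb)

end Reach

def trueVars {ι : Type*} [Fintype ι] (a : ι → Bool) : Finset ι :=
  {i | a i = true}

@[simp]
theorem mem_trueVars {ι : Type*} [Fintype ι] {a : ι → Bool} {i : ι} :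
    i ∈ trueVars a ↔ a i = true := by
  simp [trueVars]

section SelfImplicating

variable {n : ℕ} {S : Set (Fin n → Bool)}

def SelfImplicating (S : Set (Fin n → Bool)) (U : Finset (Fin n)) : Prop :=
  ∀ x ∈ U, Implied S (U.erase x) x

theorem SelfImplicating.reach_preserves {U : Finset (Fin n)} (hU : SelfImplicating S U)
    {a b : Fin n → Bool} (h : Reach S a b) (ha : ∀ u ∈ U, a u = true) : ∀ u ∈ U, b u = true := by
  induction h with
  | refl => exact ha
  | tail _ hstep ih =>
    obtain ⟨-, hc, hd⟩ := hstep
    intro u hu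
    by_contra hcu
    refine hcu (hU u hu _ hc fun v hv => ?_)
    obtain ⟨hvu, hvU⟩ := Finset.mem_erase.1 hv
    rw [← eq_of_hammingDist_eq_one hd (by simp_all) hvu]
    exact ih v hvU

theorem maxSelfImplicating_trueVars {a : Fin n → Bool} (ha : a ∈ S)
    (h : SelfImplicating S (trueVars a)) : MaxSelfImplicating S (trueVars a) :=
  ⟨h, fun _ hx => mem_trueVars.2 (hx a ha fun _ => mem_trueVars.1)⟩

theorem exists_update_false_mem (hS : ∀ a ∈ S, ∀ b ∈ S, (fun i => a i && b i) ∈ S)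
    {a : Fin n → Bool} (ha : a ∈ S) (h : ¬ SelfImplicating S (trueVars a)) :
    ∃ x ∈ trueVars a, Function.update a x false ∈ S := by
  simp only [SelfImplicating, Implied, not_forall] at h
  obtain ⟨x, hx, b, hb, hbU, hbx⟩ := h
  refine ⟨x, hx, ?_⟩
  convert hS a ha b hb using 1
  funext i
  by_cases hix : i = x
  · subst hix; simp_all
  · cases hai : a i
    · simp [hix, hai]
    · simp [hix, hai, hbU i (by simp [hix, hai])]

theorem reach_of_forall_not_selfImplicating (hS : ∀ a ∈ S, ∀ b ∈ S, (fun i => a i && b i) ∈ S)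
    (h : ∀ a ∈ S, (trueVars a).Nonempty → ¬ SelfImplicating S (trueVars a)) :
    ∀ a ∈ S, Reach S (fun _ => false) a := by
  intro a ha
  induction hk : (trueVars a).card using Nat.strong_induction_on generalizing a with
  | _ k ih =>
    rcases (trueVars a).eq_empty_or_nonempty with hempty | hne
    · have ha0 : a = fun _ => false := funext fun i => by
        simpa using Finset.eq_empty_iff_forall_notMem.1 hempty i
      exact ha0 ▸ Relation.ReflTransGen.refl
    · obtain ⟨x, hx, hxS⟩ := exists_update_false_mem hS ha (h a ha hne)
      have hlt : (trueVars (Function.update a x false)).card < k := by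
        rw [← hk]
        refine Finset.card_lt_card ⟨fun i => ?_, fun hsub => by simpa using hsub hx⟩
        by_cases hix : i = x <;> simp [hix]
      refine (ih _ hlt _ hxS rfl).tail ⟨hxS, ha, ?_⟩
      rw [hammingDist_comm]
      exact hammingDist_update_self a (by simpa using hx)

end SelfImplicating

section Models

variable {n : ℕ} {φ : List (List (Fin n × Bool))}

def Models (φ : List (List (Fin n × Bool))) : Set (Fin n → Bool) :=
  {a | ∀ c ∈ φ, SatClause a c}

theorem and_mem_models (hHorn : ∀ c ∈ φ, IsHornClause c) {a b : Fin n → Bool}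
    (ha : a ∈ Models φ) (hb : b ∈ Models φ) : (fun i => a i && b i) ∈ Models φ :=
  fun c hc => (hHorn c hc).satClause_and (ha c hc) (hb c hc)

theorem false_mem_models (hHorn : ∀ c ∈ φ, IsHornClause c)
    (hNoPosUnit : ∀ c ∈ φ, ∀ i : Fin n, c ≠ [(i, true)]) (hnil : [] ∉ φ) :
    (fun _ => false) ∈ Models φ :=
  fun c hc => (hHorn c hc).satClause_false (hNoPosUnit c hc) (ne_of_mem_of_not_mem hc hnil)

theorem noRestraintSet_trueVars {a : Fin n → Bool} (ha : a ∈ Models φ) :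
    NoRestraintSet φ (trueVars a) := by
  intro c hc hneg hU
  obtain ⟨l, hl, hsat⟩ := ha c hc
  simp [hneg l hl, mem_trueVars.1 (hU l hl)] at hsat

theorem implied_of_isHornClause {U : Finset (Fin n)} {c : List (Fin n × Bool)} (hc : c ∈ φ)
    (hHorn : IsHornClause c) {l : Fin n × Bool} (hl : l ∈ c) (hpos : l.2 = true)
    (hbody : ∀ l' ∈ c, l'.2 = false → l'.1 ∈ U) : Implied (Models φ) U l.1 := by
  intro s hs hsU
  obtain ⟨l', hl', hsat⟩ := hs c hc
  cases hpos' : l'.2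
  · simp [hpos', hsU _ (hbody l' hl' hpos')] at hsat
  · cases hHorn.eq_of_mem hl' hl hpos' hpos
    simpa [hpos'] using hsat

theorem indicator_mem_models (hHorn : ∀ c ∈ φ, IsHornClause c) {U : Finset (Fin n)}
    (hmax : ∀ x, Implied (Models φ) U x → x ∈ U) (hnr : NoRestraintSet φ U) :
    (fun i => decide (i ∈ U)) ∈ Models φ := by
  intro c hc
  by_contra hns
  have hbody : ∀ l ∈ c, l.2 = false → l.1 ∈ U := fun l hl hneg => by
    by_contra hlU
    exact hns ⟨l, hl, by simp [hneg, hlU]⟩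
  by_cases hpos : ∃ l ∈ c, l.2 = true
  · obtain ⟨l, hl, hlpos⟩ := hpos
    have hlU := hmax _ (implied_of_isHornClause hc (hHorn c hc) hl hlpos hbody)
    exact hns ⟨l, hl, by simp [hlpos, hlU]⟩
  · have hneg : ∀ l ∈ c, l.2 = false := by simpa using hpos
    exact hnr c hc hneg fun l hl => hbody l hl (hneg l hl)

end Models

theorem horn_disconnected_iff_nonempty_max_self_implicating (n : ℕ)
    (φ : List (List (Fin n × Bool)))
    (hHorn : ∀ c ∈ φ, IsHornClause c)
    (hNoPosUnit : ∀ c ∈ φ, ∀ i : Fin n, c ≠ [(i, true)]) :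
    let S : Set (Fin n → Bool) := {a | ∀ c ∈ φ, SatClause a c}
    (¬ Connected S ↔
      ∃ U : Finset (Fin n), U.Nonempty ∧ MaxSelfImplicating S U ∧ NoRestraintSet φ U) := by
  intro S
  constructor
  · intro hdis
    by_contra! hU
    exact hdis <| connected_of_reach <|
      reach_of_forall_not_selfImplicating (fun _ ha _ hb => and_mem_models hHorn ha hb)
      fun a ha hne hsi => hU _ hne (maxSelfImplicating_trueVars ha hsi) (noRestraintSet_trueVars ha)
  · rintro ⟨U, ⟨u, hu⟩, ⟨hsi, hmax⟩, hnr⟩ hconn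
    have hnil : [] ∉ φ := fun hnil => hnr [] hnil (by simp) (by simp)
    have hUS := indicator_mem_models hHorn hmax hnr
    have h0S := false_mem_models hHorn hNoPosUnit hnil
    simpa using SelfImplicating.reach_preserves hsi (hconn _ hUS _ h0S) (by simp) u hu
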